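/- Let d ≥ 2 and let G = (V,E) be a finite simple graph with at least d+1 vertices. Then a(G, ℓ∞^d) ≤ a(G, ℓ∞^{d−1}). -/

import Mathlib

open scoped Classical
open Matrix

noncomputable section

/-- The list of eigenvalues (roots of the characteristic polynomial, with multiplicity)
of a real matrix, sorted in nondecreasing order. -/
def sortedEigs {m : Type*} [Fintype m] [DecidableEq m] (A : Matrix m m ℝ) : List ℝ :=
  A.charpoly.roots.sort (· ≤ ·)

/-- `eigval A j` is the `j`-th smallest eigenvalue `λ_j(A)` (1-based, with multiplicity). -/
def eigval {m : Type*} [Fintype m] [DecidableEq m] (A : Matrix m m ℝ) (j : ℕ) : ℝ :=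
  (sortedEigs A).getD (j - 1) 0

variable {V : Type*} [Fintype V] [DecidableEq V]

/-- `p` is an ℓ∞-framework position for `G` (i.e. `p ∈ W(G, ℓ∞^d)`): along each edge the
difference of the endpoints is nonzero and has a unique coordinate of maximal absolute
value. -/
def IsLinfPos {d : ℕ} (G : SimpleGraph V) (p : V → Fin d → ℝ) : Prop :=
  ∀ ⦃v w : V⦄, G.Adj v w → p v ≠ p w ∧
    ∃ i : Fin d, ∀ j : Fin d, j ≠ i → |p v j - p w j| < |p v i - p w i|

/-- The `i`-th monochrome subgraph of the framework `(G, p)` in `ℓ∞^d`: the spanning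
subgraph of `G` whose edges are those on which the `i`-th coordinate of the difference of
the endpoints has maximal absolute value. -/
def mono {d : ℕ} (G : SimpleGraph V) (p : V → Fin d → ℝ) (i : Fin d) : SimpleGraph V where
  Adj v w := G.Adj v w ∧ ∀ j : Fin d, |p v j - p w j| ≤ |p v i - p w i|
  symm := by
    constructor
    intro v w h
    refine ⟨h.1.symm, fun j => ?_⟩
    rw [abs_sub_comm (p w j), abs_sub_comm (p w i)]
    exact h.2 j
  loopless := ⟨fun v h => G.irrefl h.1⟩

/-- The rigidity matrix `R(G,p)` of a framework in `ℓ∞^d`, with rows indexed by edges and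
columns indexed by vertex-coordinate pairs: the row of an edge `vw ∈ E_i` has entry
`sgn((p v − p w) i)` in column `(v, i)`, entry `−sgn((p v − p w) i) = sgn((p w − p v) i)`
in column `(w, i)`, and zeros elsewhere. -/
def rigidity {d : ℕ} (G : SimpleGraph V) (p : V → Fin d → ℝ) :
    Matrix G.edgeSet (V × Fin d) ℝ := fun e vi =>
  if h : vi.1 ∈ (e : Sym2 V) then
    if (mono G p vi.2).Adj vi.1 (Sym2.Mem.other h) then
      Real.sign (p vi.1 vi.2 - p (Sym2.Mem.other h) vi.2)
    else 0
  else 0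

/-- The framework Laplacian `L(G,p) = R(G,p)ᵀ R(G,p)` of a framework in `ℓ∞^d`. -/
def fLap {d : ℕ} (G : SimpleGraph V) (p : V → Fin d → ℝ) :
    Matrix (V × Fin d) (V × Fin d) ℝ :=
  (rigidity G p)ᵀ * rigidity G p

/-- The algebraic connectivity (Fiedler number) `a(H) = λ₂(L(H))` of a finite simple
graph. -/
def algConn (H : SimpleGraph V) : ℝ := eigval (H.lapMatrix ℝ) 2

/-- The algebraic connectivity of `G` in `ℓ∞^d`:
`a(G, ℓ∞^d) = sup { λ_{d+1}(L(G,p)) : p ∈ W(G, ℓ∞^d) }`. -/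
def algConnLinf (d : ℕ) (G : SimpleGraph V) : ℝ :=
  sSup {t : ℝ | ∃ p : V → Fin d → ℝ, IsLinfPos G p ∧ t = eigval (fLap G p) (d + 1)}

end

/-!
Write `L(p)` for the framework Laplacian. For an ℓ∞-position `p`, every edge has exactly one
colour, so `L(p)` is block diagonal with the Laplacians of the monochrome subgraphs as blocks, and
the spectrum of `L(p)` is the union of theirs. Given `p` in dimension `d`, drop the last coordinate
and perturb generically to get a position `q` in dimension `d - 1` whose `j`-th monochrome subgraph
contains that of `p` for every `j < d - 1`. If `λ_d(L(q)) < t := λ_{d+1}(L(p))`, then the blocks of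
`L(q)` have `d` eigenvalues below `t`; by Weyl monotonicity the first `d - 1` blocks of `L(p)` have
at least as many, and the last block of `L(p)` adds its eigenvalue `0 < t`, so `λ_{d+1}(L(p)) < t`,
a contradiction. Hence `λ_{d+1}(L(p)) ≤ λ_d(L(q))`, and taking suprema gives the theorem; the
suprema are finite because `L(q)` is determined by the finitely many possible colourings.
-/

open Filter Topology Finset Module Submodule Matrix SimpleGraph Polynomial

namespace List

theorem Pairwise.getD_lt_iff {l : List ℝ} (hl : l.Pairwise (· ≤ ·)) {k : ℕ} (hk : k < l.length)
    (t : ℝ) : l.getD k 0 < t ↔ k + 1 ≤ l.countP (· < t) := by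
  induction l generalizing k with
  | nil => simp at hk
  | cons a l ih =>
    rw [pairwise_cons] at hl
    by_cases hat : a < t
    · cases k with
      | zero => simp [hat]
      | succ k =>
        rw [getD_cons_succ, ih hl.2 (by simpa using hk), countP_cons]
        simp [hat]
    · have hge : ∀ x ∈ a :: l, t ≤ x := by
        simp only [mem_cons, forall_eq_or_imp]
        exact ⟨not_lt.1 hat, fun x hx => (not_lt.1 hat).trans (hl.1 x hx)⟩
      have hcount : (a :: l).countP (· < t) = 0 :=
        countP_eq_zero.2 fun x hx hxt => (hge x hx).not_gt (by simpa using hxt)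
      rw [hcount, getD_eq_getElem _ _ hk]
      simpa using hge _ (getElem_mem hk)

end List

namespace Matrix
variable {m : Type*} [Fintype m] [DecidableEq m] {A : Matrix m m ℝ}

theorem IsHermitian.countP_roots_charpoly (hA : A.IsHermitian) (P : ℝ → Prop) [DecidablePred P] :
    A.charpoly.roots.countP P = #{i | P (hA.eigenvalues i)} := by
  simp [hA.roots_charpoly_eq_eigenvalues, Multiset.countP_map, Finset.card, Finset.filter_val]

theorem IsHermitian.length_sortedEigs (hA : A.IsHermitian) :
    (sortedEigs A).length = Fintype.card m := by
  simp [sortedEigs, hA.roots_charpoly_eq_eigenvalues]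

theorem IsHermitian.eigval_lt_iff (hA : A.IsHermitian) {k : ℕ} (hk₀ : 1 ≤ k)
    (hk : k ≤ Fintype.card m) (t : ℝ) :
    eigval A k < t ↔ k ≤ A.charpoly.roots.countP (· < t) := by
  have hsorted : (sortedEigs A).Pairwise (· ≤ ·) := Multiset.pairwise_sort _ _
  rw [eigval, hsorted.getD_lt_iff (by rw [hA.length_sortedEigs]; omega), Nat.sub_add_cancel hk₀]
  conv_rhs => rw [← Multiset.sort_eq A.charpoly.roots (· ≤ ·)]
  rfl

theorem IsHermitian.eigval_eq_zero (hA : A.IsHermitian) {k : ℕ} (hk : Fintype.card m < k) :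
    eigval A k = 0 :=
  List.getD_eq_default _ _ (by rw [hA.length_sortedEigs]; omega)

theorem eigval_mem_roots_or_eq_zero (A : Matrix m m ℝ) (k : ℕ) :
    eigval A k ∈ A.charpoly.roots ∨ eigval A k = 0 := by
  by_cases h : k - 1 < (sortedEigs A).length
  · exact .inl <| (Multiset.mem_sort _).1 <| List.getD_eq_getElem _ _ h ▸ List.getElem_mem h
  · exact .inr <| List.getD_eq_default _ _ (not_lt.1 h)

theorem PosSemidef.nonneg_of_mem_roots_charpoly (hA : A.PosSemidef) {x : ℝ}
    (hx : x ∈ A.charpoly.roots) : 0 ≤ x := by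
  rw [hA.1.roots_charpoly_eq_eigenvalues] at hx
  obtain ⟨i, -, rfl⟩ := Multiset.mem_map.1 hx
  exact hA.eigenvalues_nonneg i

theorem eigval_nonneg (h : ∀ x ∈ A.charpoly.roots, 0 ≤ x) (k : ℕ) : 0 ≤ eigval A k := by
  rcases eigval_mem_roots_or_eq_zero A k with hk | hk
  · exact h _ hk
  · exact hk.ge

end Matrix

theorem OrthonormalBasis.finrank_span_image {ι E : Type*} [Fintype ι] [NormedAddCommGroup E]
    [InnerProductSpace ℝ E] (b : OrthonormalBasis ι ℝ E) (s : Finset ι) :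
    finrank ℝ (span ℝ (b '' s)) = #s := by
  rw [Set.image_eq_range]
  exact (finrank_span_eq_card (b.orthonormal.linearIndependent.comp _ Subtype.val_injective)).trans
    (by simp)

theorem OrthonormalBasis.repr_eq_zero_of_mem_span {ι E : Type*} [Fintype ι] [NormedAddCommGroup E]
    [InnerProductSpace ℝ E] (b : OrthonormalBasis ι ℝ E) {s : Set ι} {x : E}
    (hx : x ∈ span ℝ (b '' s)) {i : ι} (hi : i ∉ s) : b.repr x i = 0 := by
  rw [← b.coe_toBasis, b.toBasis.mem_span_image] at hx
  simpa [b.coe_toBasis_repr_apply] using mt (@hx i) hi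

namespace Matrix.IsHermitian
variable {m : Type*} [Fintype m] [DecidableEq m] {A B : Matrix m m ℝ}

theorem dotProduct_mulVec_sub_eq_sum (hA : A.IsHermitian) (t : ℝ) (x : EuclideanSpace ℝ m) :
    x.ofLp ⬝ᵥ A *ᵥ x.ofLp - t * (x.ofLp ⬝ᵥ x.ofLp) =
      ∑ i, (hA.eigenvalues i - t) * hA.eigenvectorBasis.repr x i ^ 2 := by
  set b := hA.eigenvectorBasis
  have hdot : ∀ y : EuclideanSpace ℝ m, x.ofLp ⬝ᵥ y.ofLp = ∑ i, b.repr x i * b.repr y i := by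
    intro y
    rw [show x.ofLp ⬝ᵥ y.ofLp = inner ℝ x y by
      simp [EuclideanSpace.inner_eq_star_dotProduct, dotProduct_comm], ← b.sum_inner_mul_inner]
    simp [b.repr_apply_apply, real_inner_comm x]
  have heigen : ∀ i, b.repr (WithLp.toLp 2 (A *ᵥ x.ofLp)) i = hA.eigenvalues i * b.repr x i := by
    intro i
    have hAT : Aᵀ = A := by simpa [conjTranspose_eq_transpose_of_trivial] using hA.eq
    simp only [b.repr_apply_apply, EuclideanSpace.inner_eq_star_dotProduct, star_trivial]
    rw [dotProduct_comm, dotProduct_mulVec, ← mulVec_transpose, hAT, hA.mulVec_eigenvectorBasis,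
      smul_dotProduct, smul_eq_mul, dotProduct_comm]
  rw [hdot (WithLp.toLp 2 (A *ᵥ x.ofLp)), hdot x, Finset.mul_sum, ← Finset.sum_sub_distrib]
  exact Finset.sum_congr rfl fun i _ => by rw [heigen]; ring

theorem dotProduct_mulVec_lt_of_mem_span (hA : A.IsHermitian) {t : ℝ} {s : Set m}
    (hs : ∀ i ∈ s, hA.eigenvalues i < t) {x : EuclideanSpace ℝ m}
    (hx : x ∈ span ℝ (hA.eigenvectorBasis '' s)) (hx0 : x ≠ 0) :
    x.ofLp ⬝ᵥ A *ᵥ x.ofLp < t * (x.ofLp ⬝ᵥ x.ofLp) := by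
  have hcoeff : ∀ i, (hA.eigenvalues i - t) * hA.eigenvectorBasis.repr x i ^ 2 ≤ 0 := by
    intro i
    by_cases hi : i ∈ s
    · exact mul_nonpos_of_nonpos_of_nonneg (by linarith [hs i hi]) (sq_nonneg _)
    · simp [hA.eigenvectorBasis.repr_eq_zero_of_mem_span hx hi]
  obtain ⟨i, hi⟩ : ∃ i, hA.eigenvectorBasis.repr x i ≠ 0 := by
    by_contra! h
    exact hx0 (hA.eigenvectorBasis.repr.injective (by ext i; simp [h i]))
  have his : i ∈ s := by_contra fun his => hi (hA.eigenvectorBasis.repr_eq_zero_of_mem_span hx his)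
  have hneg : (hA.eigenvalues i - t) * hA.eigenvectorBasis.repr x i ^ 2 < 0 :=
    mul_neg_of_neg_of_pos (by linarith [hs i his]) (by positivity)
  have := Finset.sum_lt_sum (fun j _ => hcoeff j) ⟨i, Finset.mem_univ i, hneg⟩
  rw [← hA.dotProduct_mulVec_sub_eq_sum] at this
  simpa using this

theorem le_dotProduct_mulVec_of_mem_span (hA : A.IsHermitian) {t : ℝ} {s : Set m}
    (hs : ∀ i ∈ s, t ≤ hA.eigenvalues i) {x : EuclideanSpace ℝ m}
    (hx : x ∈ span ℝ (hA.eigenvectorBasis '' s)) :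
    t * (x.ofLp ⬝ᵥ x.ofLp) ≤ x.ofLp ⬝ᵥ A *ᵥ x.ofLp := by
  have : 0 ≤ ∑ i, (hA.eigenvalues i - t) * hA.eigenvectorBasis.repr x i ^ 2 := by
    refine Finset.sum_nonneg fun i _ => ?_
    by_cases hi : i ∈ s
    · exact mul_nonneg (by linarith [hs i hi]) (sq_nonneg _)
    · simp [hA.eigenvectorBasis.repr_eq_zero_of_mem_span hx hi]
  rw [← hA.dotProduct_mulVec_sub_eq_sum] at this
  linarith

/-- Weyl monotonicity, in counting form. -/
theorem countP_roots_charpoly_lt_le (hA : A.IsHermitian) (hB : B.IsHermitian)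
    (hAB : (B - A).PosSemidef) (t : ℝ) :
    B.charpoly.roots.countP (· < t) ≤ A.charpoly.roots.countP (· < t) := by
  rw [hA.countP_roots_charpoly, hB.countP_roots_charpoly]
  set U := span ℝ (hB.eigenvectorBasis '' ↑(univ.filter fun i => hB.eigenvalues i < t))
  set W := span ℝ (hA.eigenvectorBasis '' ↑(univ.filter fun i => ¬hA.eigenvalues i < t))
  have hUW : Disjoint U W := by
    refine Submodule.disjoint_def.2 fun x hxU hxW => by_contra fun hx0 => ?_
    have hB' := hB.dotProduct_mulVec_lt_of_mem_span (t := t) (by simp) hxU hx0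
    have hA' := hA.le_dotProduct_mulVec_of_mem_span (t := t) (by simp) hxW
    have hle := hAB.dotProduct_mulVec_nonneg x.ofLp
    rw [star_trivial, sub_mulVec, dotProduct_sub] at hle
    linarith
  have hdim := Submodule.finrank_add_finrank_le_of_disjoint hUW
  rw [OrthonormalBasis.finrank_span_image, OrthonormalBasis.finrank_span_image,
    finrank_euclideanSpace] at hdim
  have := Finset.card_filter_add_card_filter_not (s := univ) fun i => hA.eigenvalues i < t
  rw [Finset.card_univ] at this
  omega

end Matrix.IsHermitian

namespace Matrix
variable {n o R : Type*} [Fintype n] [DecidableEq n] [Fintype o] [DecidableEq o] [CommRing R]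

theorem charmatrix_blockDiagonal (M : o → Matrix n n R) :
    charmatrix (blockDiagonal M) = blockDiagonal fun k => charmatrix (M k) := by
  change _ = blockDiagonal ((fun _ => scalar n X) - fun k => (M k).map C)
  rw [blockDiagonal_sub, ← blockDiagonal_map _ _ (map_zero C)]
  simp [charmatrix, blockDiagonal_diagonal]

theorem charpoly_blockDiagonal (M : o → Matrix n n R) :
    (blockDiagonal M).charpoly = ∏ k, (M k).charpoly := by
  rw [charpoly, charmatrix_blockDiagonal, det_blockDiagonal]
  rfl

theorem roots_charpoly_blockDiagonal [IsDomain R] (M : o → Matrix n n R) :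
    (blockDiagonal M).charpoly.roots = ∑ k, (M k).charpoly.roots := by
  rw [charpoly_blockDiagonal,
    roots_prod _ _ (Finset.prod_ne_zero_iff.2 fun k _ => (charpoly_monic _).ne_zero)]
  rfl

theorem countP_roots_charpoly_blockDiagonal [IsDomain R] (M : o → Matrix n n R) (P : R → Prop)
    [DecidablePred P] :
    (blockDiagonal M).charpoly.roots.countP P = ∑ k, (M k).charpoly.roots.countP P := by
  rw [roots_charpoly_blockDiagonal, ← Multiset.coe_countPAddMonoidHom, map_sum]

end Matrix

namespace SimpleGraph
variable {V : Type*} [Fintype V] [DecidableEq V]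

theorem lapMatrix_sdiff {H H' : SimpleGraph V} [DecidableRel H.Adj] [DecidableRel H'.Adj]
    (h : H ≤ H') : (H' \ H).lapMatrix ℝ = H'.lapMatrix ℝ - H.lapMatrix ℝ := by
  have hadj : ∀ v w, (if (H' \ H).Adj v w then 1 else 0 : ℝ) =
      (if H'.Adj v w then 1 else 0) - (if H.Adj v w then 1 else 0) := by
    intro v w
    by_cases hH : H.Adj v w
    · simp [hH, h hH]
    · simp [hH]
  have hdeg : ∀ v, ((H' \ H).degree v : ℝ) = H'.degree v - H.degree v := by
    intro v
    rw [degree_eq_sum_if_adj, degree_eq_sum_if_adj, degree_eq_sum_if_adj]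
    simp only [hadj, Finset.sum_sub_distrib]
  ext v w
  simp only [lapMatrix, degMatrix, Matrix.sub_apply, diagonal_apply, adjMatrix_apply, hadj, hdeg]
  split_ifs <;> ring

theorem posSemidef_lapMatrix_sub_of_le {H H' : SimpleGraph V} [DecidableRel H.Adj]
    [DecidableRel H'.Adj] (h : H ≤ H') : (H'.lapMatrix ℝ - H.lapMatrix ℝ).PosSemidef :=
  lapMatrix_sdiff h ▸ posSemidef_lapMatrix ℝ _

theorem lapMatrix_apply_eq_incMatrix (H : SimpleGraph V) [DecidableRel H.Adj] (v w : V) :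
    H.lapMatrix ℝ v w = (if v = w then 1 else -1) * (H.incMatrix ℝ * (H.incMatrix ℝ)ᵀ) v w := by
  rw [incMatrix_mul_transpose]
  by_cases hvw : v = w
  · subst hvw
    simp [lapMatrix, degMatrix]
  · simp only [lapMatrix, degMatrix, Matrix.sub_apply, diagonal_apply_ne _ hvw, adjMatrix_apply,
      of_apply, if_neg hvw]
    split_ifs <;> simp

theorem zero_mem_roots_charpoly_lapMatrix [Nonempty V] (H : SimpleGraph V) [DecidableRel H.Adj] :
    (0 : ℝ) ∈ (H.lapMatrix ℝ).charpoly.roots := by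
  rw [Polynomial.mem_roots (charpoly_monic _).ne_zero, Polynomial.IsRoot, eval_charpoly]
  simp [det_neg, det_lapMatrix_eq_zero]

theorem nonneg_of_mem_roots_charpoly_blockDiagonal_lapMatrix {o : Type*} [Fintype o]
    [DecidableEq o] (H : o → SimpleGraph V) {x : ℝ}
    (hx : x ∈ (blockDiagonal fun i => (H i).lapMatrix ℝ).charpoly.roots) : 0 ≤ x := by
  rw [roots_charpoly_blockDiagonal] at hx
  obtain ⟨i, -, hi⟩ := Multiset.mem_sum.1 hx
  exact (posSemidef_lapMatrix ℝ _).nonneg_of_mem_roots_charpoly hi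

theorem countP_roots_charpoly_blockDiagonal_lapMatrix_lt [Nonempty V] {m : ℕ}
    (H : Fin (m + 1) → SimpleGraph V) (H' : Fin m → SimpleGraph V)
    (hle : ∀ j, H j.castSucc ≤ H' j) {t : ℝ} (ht : 0 < t) :
    (blockDiagonal fun j => (H' j).lapMatrix ℝ).charpoly.roots.countP (· < t) <
      (blockDiagonal fun i => (H i).lapMatrix ℝ).charpoly.roots.countP (· < t) := by
  have hlast : 0 < ((H (Fin.last m)).lapMatrix ℝ).charpoly.roots.countP (· < t) :=
    Multiset.countP_pos.2 ⟨0, zero_mem_roots_charpoly_lapMatrix _, ht⟩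
  have hinit : ∑ j, ((H' j).lapMatrix ℝ).charpoly.roots.countP (· < t) ≤
      ∑ j : Fin m, ((H j.castSucc).lapMatrix ℝ).charpoly.roots.countP (· < t) :=
    sum_le_sum fun j _ => (isHermitian_lapMatrix _ _).countP_roots_charpoly_lt_le
      (isHermitian_lapMatrix _ _) (posSemidef_lapMatrix_sub_of_le (hle j)) t
  rw [countP_roots_charpoly_blockDiagonal, countP_roots_charpoly_blockDiagonal,
    Fin.sum_univ_castSucc]
  omega

theorem eigval_blockDiagonal_lapMatrix_le {m : ℕ} (hm : 0 < m) (H : Fin (m + 1) → SimpleGraph V)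
    (H' : Fin m → SimpleGraph V) (hle : ∀ j, H j.castSucc ≤ H' j) :
    eigval (blockDiagonal fun i => (H i).lapMatrix ℝ) (m + 2) ≤
      eigval (blockDiagonal fun j => (H' j).lapMatrix ℝ) (m + 1) := by
  have hL : (blockDiagonal fun i => (H i).lapMatrix ℝ).IsHermitian :=
    isHermitian_blockDiagonal_iff.2 fun _ => isHermitian_lapMatrix _ _
  have hL' : (blockDiagonal fun j => (H' j).lapMatrix ℝ).IsHermitian :=
    isHermitian_blockDiagonal_iff.2 fun _ => isHermitian_lapMatrix _ _
  by_contra! hlt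
  set t := eigval (blockDiagonal fun i => (H i).lapMatrix ℝ) (m + 2)
  have ht : 0 < t := (eigval_nonneg
    (fun _ => nonneg_of_mem_roots_charpoly_blockDiagonal_lapMatrix H') _).trans_lt hlt
  -- `eigval` past the size of the matrix is the junk value `0`, so `t > 0` forces `|V| ≥ 2`.
  have hcard : m + 2 ≤ Fintype.card (V × Fin (m + 1)) :=
    by_contra fun h => ht.ne' (hL.eigval_eq_zero (by omega))
  have hcardV : 2 ≤ Fintype.card V := by
    simp only [Fintype.card_prod, Fintype.card_fin] at hcard
    nlinarith
  have hcard' : m + 1 ≤ Fintype.card (V × Fin m) := by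
    simp only [Fintype.card_prod, Fintype.card_fin]
    nlinarith
  have : Nonempty V := Fintype.card_pos_iff.1 (by omega)
  have hcount := countP_roots_charpoly_blockDiagonal_lapMatrix_lt H H' hle ht
  have hlt' := (hL'.eigval_lt_iff (by omega) hcard' t).1 hlt
  exact lt_irrefl t ((hL.eigval_lt_iff (by omega) hcard t).2 (by omega))

end SimpleGraph

section Perturbation

theorem eventually_add_mul_ne_zero (x : ℝ) {a : ℝ} (ha : a ≠ 0) :
    ∀ᶠ ε in 𝓝[≠] 0, x + ε * a ≠ 0 := by
  rcases eq_or_ne x 0 with rfl | hx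
  · exact eventually_nhdsWithin_of_forall fun ε hε => by simpa using And.intro hε ha
  · exact ((continuous_const.add (continuous_id.mul continuous_const)).continuousAt.eventually_ne
      (by simpa using hx)).filter_mono nhdsWithin_le_nhds

theorem eventually_abs_add_mul_lt {x y : ℝ} (h : |x| < |y|) (a b : ℝ) :
    ∀ᶠ ε in 𝓝[≠] 0, |x + ε * a| < |y + ε * b| := by
  have hcont : ∀ z c : ℝ, Continuous fun ε : ℝ => |z + ε * c| :=
    fun z c => (continuous_const.add (continuous_id.mul continuous_const)).abs
  exact ((hcont x a).continuousAt.eventually_lt (hcont y b).continuousAt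
    (by simpa using h)).filter_mono nhdsWithin_le_nhds

/-- The weights `j + 1` are distinct and positive, so each zero coordinate and each tie
`y j = ± y k` of the perturbed vector `y` is a nontrivial affine equation in `ε`. -/
theorem eventually_perturbation {m : ℕ} (x : Fin m → ℝ) {δ : ℝ} (hδ : δ ≠ 0) :
    ∀ᶠ ε in 𝓝[≠] 0,
      (∀ j, x j + ε * ((j + 1) * δ) ≠ 0) ∧
      (∀ j k, j ≠ k → |x j + ε * ((j + 1) * δ)| ≠ |x k + ε * ((k + 1) * δ)|) ∧
      (∀ j k, |x k| < |x j| → |x k + ε * ((k + 1) * δ)| < |x j + ε * ((j + 1) * δ)|) := by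
  refine (eventually_all.2 fun j => ?_).and
    ((eventually_all.2 fun j => eventually_all.2 fun k => ?_).and
      (eventually_all.2 fun j => eventually_all.2 fun k => ?_))
  · exact eventually_add_mul_ne_zero _ (mul_ne_zero (by positivity) hδ)
  · rcases eq_or_ne j k with rfl | hjk
    · exact Eventually.of_forall fun _ h => (h rfl).elim
    have hsub : ((j : ℝ) + 1) * δ - ((k : ℝ) + 1) * δ ≠ 0 := by
      rw [← sub_mul]
      exact mul_ne_zero (by simpa [sub_eq_zero, Fin.val_inj] using hjk) hδ
    have hadd : ((j : ℝ) + 1) * δ + ((k : ℝ) + 1) * δ ≠ 0 := by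
      rw [← add_mul]
      exact mul_ne_zero (by positivity) hδ
    filter_upwards [eventually_add_mul_ne_zero (x j - x k) hsub,
      eventually_add_mul_ne_zero (x j + x k) hadd] with ε h₁ h₂ _ h
    rcases abs_eq_abs.1 h with h | h
    · exact h₁ (by linear_combination h)
    · exact h₂ (by linear_combination h)
  · by_cases hjk : |x k| < |x j|
    · filter_upwards [eventually_abs_add_mul_lt hjk ((k + 1) * δ) ((j + 1) * δ)] with ε h _ using h
    · exact Eventually.of_forall fun _ h => (hjk h).elim

end Perturbation

section Framework

variable {V : Type*} {d : ℕ} {G : SimpleGraph V} {p : V → Fin d → ℝ}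

theorem mono_le {i : Fin d} : mono G p i ≤ G := fun _ _ h => h.1

theorem isLinfPos_of_forall_abs_ne {m : ℕ} (hm : 0 < m) {q : V → Fin m → ℝ}
    (h : ∀ ⦃v w⦄, G.Adj v w → q v ⟨0, hm⟩ ≠ q w ⟨0, hm⟩ ∧
      ∀ j k, j ≠ k → |q v j - q w j| ≠ |q v k - q w k|) : IsLinfPos G q := by
  intro v w hvw
  obtain ⟨h₀, hne⟩ := h hvw
  obtain ⟨i, -, hi⟩ := exists_max_image univ (fun j => |q v j - q w j|) ⟨⟨0, hm⟩, mem_univ _⟩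
  exact ⟨fun hq => h₀ (congrFun hq _), i, fun j hji => (hi j (mem_univ _)).lt_of_ne (hne j i hji)⟩

namespace IsLinfPos

theorem abs_sub_lt_of_mono_adj (hp : IsLinfPos G p) {i : Fin d} {v w : V}
    (h : (mono G p i).Adj v w) (j : Fin d) (hji : j ≠ i) :
    |p v j - p w j| < |p v i - p w i| := by
  obtain ⟨-, k, hk⟩ := hp h.1
  obtain rfl : i = k := by_contra fun hik => (hk i hik).not_ge (h.2 k)
  exact hk j hji

theorem eq_of_mono_adj (hp : IsLinfPos G p) {i j : Fin d} {v w : V}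
    (hi : (mono G p i).Adj v w) (hj : (mono G p j).Adj v w) : i = j :=
  by_contra fun hij => (hp.abs_sub_lt_of_mono_adj hi j (Ne.symm hij)).not_ge (hj.2 i)

theorem sub_ne_zero_of_mono_adj (hp : IsLinfPos G p) {i : Fin d} {v w : V}
    (hi : (mono G p i).Adj v w) : p v i - p w i ≠ 0 := by
  intro h0
  refine (hp hi.1).1 (funext fun j => ?_)
  have := hi.2 j
  rw [h0, abs_zero] at this
  exact sub_eq_zero.1 (abs_nonpos_iff.1 this)

theorem sign_mul_self_of_mono_adj (hp : IsLinfPos G p) {a b : V} {c : Fin d}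
    (hab : (mono G p c).Adj a b) : Real.sign (p a c - p b c) * Real.sign (p a c - p b c) = 1 := by
  rcases (hp.sub_ne_zero_of_mono_adj hab).lt_or_gt with h | h <;>
    simp [Real.sign_of_neg, Real.sign_of_pos, h]

theorem exists_mono_adj (hp : IsLinfPos G p) {a b : V} (hab : G.Adj a b) :
    ∃ c, (mono G p c).Adj a b := by
  obtain ⟨-, c, hc⟩ := hp hab
  refine ⟨c, hab, fun j => ?_⟩
  rcases eq_or_ne j c with rfl | hjc
  · exact le_rfl
  · exact (hc j hjc).le

theorem exists_mono_castSucc_le [Fintype V] {m : ℕ} (hm : 0 < m)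
    {p : V → Fin (m + 1) → ℝ} (hp : IsLinfPos G p) :
    ∃ q : V → Fin m → ℝ, IsLinfPos G q ∧ ∀ j, mono G p j.castSucc ≤ mono G q j := by
  obtain ⟨c, hc⟩ : ∃ c : V → ℝ, Function.Injective c :=
    ⟨fun v => (Fintype.equivFin V v : ℝ),
      Nat.cast_injective.comp (Fin.val_injective.comp (Fintype.equivFin V).injective)⟩
  have hgood := eventually_all.2 fun v => eventually_all.2 fun w => eventually_all.2
    fun hvw : G.Adj v w => eventually_perturbation (fun j => p v j.castSucc - p w j.castSucc)
      (sub_ne_zero.2 (hc.ne hvw.ne))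
  obtain ⟨ε, hε⟩ := hgood.exists
  set q : V → Fin m → ℝ := fun v j => p v j.castSucc + ε * ((j + 1) * c v)
  have hq : ∀ v w j, q v j - q w j =
      p v j.castSucc - p w j.castSucc + ε * ((j + 1) * (c v - c w)) := fun v w j => by ring
  refine ⟨q, isLinfPos_of_forall_abs_ne hm fun v w hvw => ⟨fun h => ?_, fun j k hjk => ?_⟩,
    fun j v w hvw => ⟨hvw.1, fun k => ?_⟩⟩
  · exact (hε v w hvw).1 ⟨0, hm⟩ (by rw [← hq, h, sub_self])
  · rw [hq, hq]
    exact (hε v w hvw).2.1 j k hjk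
  · rw [hq, hq]
    rcases eq_or_ne k j with rfl | hkj
    · exact le_rfl
    · exact ((hε v w hvw.1).2.2 j k
        (hp.abs_sub_lt_of_mono_adj hvw k.castSucc (Fin.castSucc_injective m |>.ne hkj))).le

variable [DecidableEq V]

theorem rigidity_mk_apply (hp : IsLinfPos G p) {a b : V} (he : s(a, b) ∈ G.edgeSet) {c : Fin d}
    (hab : (mono G p c).Adj a b) (x : V) (i : Fin d) :
    rigidity G p ⟨s(a, b), he⟩ (x, i) =
      if i = c then
        if x = a then Real.sign (p a c - p b c) else if x = b then -Real.sign (p a c - p b c) else 0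
      else 0 := by
  have hmono : ∀ {u w}, s(u, w) = s(a, b) → ((mono G p i).Adj u w ↔ i = c) := by
    intro u w huw
    rcases Sym2.eq_iff.1 huw with ⟨rfl, rfl⟩ | ⟨rfl, rfl⟩
    · exact ⟨fun h => hp.eq_of_mono_adj h hab, fun h => h ▸ hab⟩
    · exact ⟨fun h => hp.eq_of_mono_adj h.symm hab, fun h => h ▸ hab.symm⟩
  simp only [rigidity]
  by_cases hx : x ∈ s(a, b)
  · have hxu := Sym2.other_spec hx
    rw [dif_pos hx]
    generalize Sym2.Mem.other hx = u at hxu ⊢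
    simp only [hmono hxu]
    rcases Sym2.eq_iff.1 hxu with ⟨rfl, rfl⟩ | ⟨rfl, rfl⟩
    · by_cases hic : i = c
      · subst hic; simp
      · simp [hic]
    · by_cases hic : i = c
      · subst hic; simp [hab.1.ne.symm, ← Real.sign_neg]
      · simp [hic]
  · obtain ⟨hxa, hxb⟩ : x ≠ a ∧ x ≠ b := by simpa [not_or] using hx
    simp [hx, hxa, hxb]

theorem rigidity_mul_rigidity (hp : IsLinfPos G p) (e : G.edgeSet) (v w : V) (i j : Fin d) :
    rigidity G p e (v, i) * rigidity G p e (w, j) =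
      if i = j then
        (if v = w then 1 else -1) * ((mono G p i).incMatrix ℝ v e * (mono G p i).incMatrix ℝ w e)
      else 0 := by
  obtain ⟨e, he⟩ := e
  induction e using Sym2.ind with | h a b => ?_
  obtain ⟨c, hab⟩ : ∃ c, (mono G p c).Adj a b := hp.exists_mono_adj he
  have hmono : ∀ i, (mono G p i).Adj a b ↔ i = c :=
    fun i => ⟨fun h => hp.eq_of_mono_adj h hab, fun h => h ▸ hab⟩
  have hσ := hp.sign_mul_self_of_mono_adj hab
  have hne : a ≠ b := hab.1.ne
  simp only [hp.rigidity_mk_apply he hab, incMatrix_apply', mk'_mem_incidenceSet_iff, hmono]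
  split_ifs <;> simp_all

theorem sum_incMatrix_mul_incMatrix [Fintype V] (i : Fin d) (v w : V) :
    ∑ e : G.edgeSet, (mono G p i).incMatrix ℝ v e * (mono G p i).incMatrix ℝ w e =
      ((mono G p i).incMatrix ℝ * ((mono G p i).incMatrix ℝ)ᵀ) v w := by
  rw [Finset.sum_set_coe
    (f := fun e => (mono G p i).incMatrix ℝ v e * (mono G p i).incMatrix ℝ w e), mul_apply]
  refine Finset.sum_subset (subset_univ _) fun e _ he => ?_
  have hv : e ∉ (mono G p i).incidenceSet v :=
    fun h => he (Set.mem_toFinset.2 (edgeSet_mono mono_le h.1))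
  simp [(mono G p i).incMatrix_of_notMem_incidenceSet hv]

theorem fLap_eq_blockDiagonal [Fintype V] (hp : IsLinfPos G p) :
    fLap G p = blockDiagonal fun i => (mono G p i).lapMatrix ℝ := by
  ext ⟨v, i⟩ ⟨w, j⟩
  rw [fLap, mul_apply, blockDiagonal_apply]
  simp only [transpose_apply, hp.rigidity_mul_rigidity]
  by_cases hij : i = j
  · subst hij
    simp only [if_true]
    rw [← Finset.mul_sum, sum_incMatrix_mul_incMatrix, lapMatrix_apply_eq_incMatrix]
  · simp [hij]

end IsLinfPos

end Framework

theorem bddAbove_eigval_fLap {V : Type*} [Fintype V] [DecidableEq V] (d k : ℕ)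
    (G : SimpleGraph V) :
    BddAbove {t : ℝ | ∃ p : V → Fin d → ℝ, IsLinfPos G p ∧ t = eigval (fLap G p) k} := by
  refine (Set.finite_range fun H : Fin d → SimpleGraph V =>
    eigval (blockDiagonal fun i => (H i).lapMatrix ℝ) k).bddAbove.mono ?_
  rintro _ ⟨p, hp, rfl⟩
  exact ⟨mono G p, by rw [hp.fLap_eq_blockDiagonal]⟩

theorem algConnLinf_antitone_general {V : Type*} [Fintype V] [DecidableEq V] {d : ℕ}
    (hd : 2 ≤ d) (G : SimpleGraph V) :
    algConnLinf d G ≤ algConnLinf (d - 1) G := by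
  obtain ⟨m, rfl⟩ : ∃ m, d = m + 1 := ⟨d - 1, by omega⟩
  have hm : 0 < m := by omega
  rw [Nat.add_sub_cancel]
  refine Real.sSup_le ?_ (Real.sSup_nonneg ?_)
  · rintro _ ⟨p, hp, rfl⟩
    obtain ⟨q, hq, hpq⟩ := hp.exists_mono_castSucc_le hm
    calc eigval (fLap G p) (m + 1 + 1) ≤ eigval (fLap G q) (m + 1) := by
          rw [hp.fLap_eq_blockDiagonal, hq.fLap_eq_blockDiagonal]
          exact eigval_blockDiagonal_lapMatrix_le hm _ _ hpq
      _ ≤ algConnLinf m G := le_csSup (bddAbove_eigval_fLap _ _ G) ⟨q, hq, rfl⟩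
  · rintro _ ⟨q, hq, rfl⟩
    rw [hq.fLap_eq_blockDiagonal]
    exact eigval_nonneg (fun _ => nonneg_of_mem_roots_charpoly_blockDiagonal_lapMatrix _) _

/-- For `d ≥ 2` and a finite simple graph `G` with at least `d+1` vertices,
`a(G, ℓ∞^d) ≤ a(G, ℓ∞^{d−1})`. -/
theorem algConnLinf_antitone {V : Type*} [Fintype V] [DecidableEq V] {d : ℕ}
    (hd : 2 ≤ d) (G : SimpleGraph V) (hV : d + 1 ≤ Fintype.card V) :
    algConnLinf d G ≤ algConnLinf (d - 1) G :=
  algConnLinf_antitone_general hd G
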